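/- Let A₁ and A₂ be forest automata over Σ and Δ respectively, α : Σ × Q₁ → Δ a control function defined by α(σ,(q_δ)) = the first δ ∈ Δ (in a fixed linear order on Δ) with q_δ ∈ F_δ if one exists, and the last element of Δ otherwise, where A₁ = Π_{δ∈Δ} A_δ is a direct product with designated final sets F_δ ⊆ Q_δ. Then for every Σ-forest s, the value of s in the Moore product A₁ ×_α A₂ equals ((s^{A_δ})_{δ∈Δ}, ŝ^{A₂}), where ŝ is the characteristic forest of s with respect to the tree languages L(A_δ,F_δ). -/
import Mathlib


mutual
/-- Trees over alphabet `σ`. -/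
inductive FTree (σ : Type) where
  | node : σ → FForest σ → FTree σ
/-- Forests over alphabet `σ`: ordered tuples of trees. -/
inductive FForest (σ : Type) where
  | nil : FForest σ
  | cons : FTree σ → FForest σ → FForest σ
end

structure FA (σ Q : Type) where
  add : Q → Q → Q
  zero : Q
  act : σ → Q → Q

mutual
/-- Evaluation of a tree in a forest automaton. -/
def evalT {σ Q : Type} (A : FA σ Q) : FTree σ → Q
  | .node a s => A.act a (evalF A s)
/-- Evaluation of a forest in a forest automaton. -/
def evalF {σ Q : Type} (A : FA σ Q) : FForest σ → Q
  | .nil => A.zero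
  | .cons t s => A.add (evalT A t) (evalF A s)
end

def moore {σ Δ Q₁ Q₂ : Type} (A : FA σ Q₁) (B : FA Δ Q₂)
    (α : σ → Q₁ → Δ) : FA σ (Q₁ × Q₂) where
  add p q := (A.add p.1 q.1, B.add p.2 q.2)
  zero := (A.zero, B.zero)
  act a pq := (A.act a pq.1, B.act (α a (A.act a pq.1)) pq.2)

/-- The direct product `Π_{δ∈Δ} A_δ` of a family of forest automata over a
common alphabet. -/
def prodFA {σ Δ : Type} {Q : Δ → Type} (A : (δ : Δ) → FA σ (Q δ)) :
    FA σ ((δ : Δ) → Q δ) where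
  add p q := fun δ => (A δ).add (p δ) (q δ)
  zero := fun δ => (A δ).zero
  act a p := fun δ => (A δ).act a (p δ)

open Classical in
/-- The first element of `Δ` (in its linear order) satisfying `P`, or the
last element of `Δ` if none does. -/
noncomputable def firstOrLast {Δ : Type} [Fintype Δ] [LinearOrder Δ]
    [Nonempty Δ] (P : Δ → Prop) : Δ :=
  if h : ({δ : Δ | P δ}.toFinset).Nonempty then ({δ : Δ | P δ}.toFinset).min' h
  else Finset.univ.max' Finset.univ_nonempty

mutual
/-- Characteristic tree: relabel each node by the first `δ` whose language
`L(A_δ, F_δ)` contains the subtree rooted there (or the last `δ`). -/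
noncomputable def charT {σ Δ : Type} [Fintype Δ] [LinearOrder Δ] [Nonempty Δ]
    {Q : Δ → Type} (A : (δ : Δ) → FA σ (Q δ)) (F : (δ : Δ) → Set (Q δ)) :
    FTree σ → FTree Δ
  | .node a s => .node (firstOrLast fun δ => evalT (A δ) (.node a s) ∈ F δ)
      (charF A F s)
/-- Characteristic forest of a `σ`-forest. -/
noncomputable def charF {σ Δ : Type} [Fintype Δ] [LinearOrder Δ] [Nonempty Δ]
    {Q : Δ → Type} (A : (δ : Δ) → FA σ (Q δ)) (F : (δ : Δ) → Set (Q δ)) :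
    FForest σ → FForest Δ
  | .nil => .nil
  | .cons t s => .cons (charT A F t) (charF A F s)
end


mutual
theorem auxT {σ Δ : Type} [Fintype Δ] [LinearOrder Δ] [Nonempty Δ]
    {Q : Δ → Type} {Q₂ : Type}
    (A : (δ : Δ) → FA σ (Q δ)) (F : (δ : Δ) → Set (Q δ)) (A₂ : FA Δ Q₂)
    (α : σ → ((δ : Δ) → Q δ) → Δ)
    (hα : ∀ (a : σ) (q : (δ : Δ) → Q δ),
      α a q = firstOrLast fun δ => q δ ∈ F δ) :
    ∀ t : FTree σ,
      evalT (moore (prodFA A) A₂ α) t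
        = ((fun δ => evalT (A δ) t), evalT A₂ (charT A F t))
  | .node a s => by
    have ih := auxF A F A₂ α hα s
    show (moore (prodFA A) A₂ α).act a (evalF (moore (prodFA A) A₂ α) s) = _
    rw [ih]
    simp [moore, prodFA, hα, evalT, charT]
theorem auxF {σ Δ : Type} [Fintype Δ] [LinearOrder Δ] [Nonempty Δ]
    {Q : Δ → Type} {Q₂ : Type}
    (A : (δ : Δ) → FA σ (Q δ)) (F : (δ : Δ) → Set (Q δ)) (A₂ : FA Δ Q₂)
    (α : σ → ((δ : Δ) → Q δ) → Δ)
    (hα : ∀ (a : σ) (q : (δ : Δ) → Q δ),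
      α a q = firstOrLast fun δ => q δ ∈ F δ) :
    ∀ s : FForest σ,
      evalF (moore (prodFA A) A₂ α) s
        = ((fun δ => evalF (A δ) s), evalF A₂ (charF A F s))
  | .nil => by rfl
  | .cons t s => by
    have iht := auxT A F A₂ α hα t
    have ihs := auxF A F A₂ α hα s
    show (moore (prodFA A) A₂ α).add (evalT (moore (prodFA A) A₂ α) t)
      (evalF (moore (prodFA A) A₂ α) s) = _
    rw [iht, ihs]
    simp [moore, prodFA, evalF, charF]
end

/-- With the control function choosing the first `δ` whose
final set contains the corresponding component (or the last `δ`), the value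
of any forest `s` in the Moore product `(Π_δ A_δ) ×_α A₂` is
`((s^{A_δ})_δ, ŝ^{A₂})`, where `ŝ` is the characteristic forest of `s`. -/
theorem stmt12 {σ Δ : Type} [Fintype Δ] [LinearOrder Δ] [Nonempty Δ]
    {Q : Δ → Type} {Q₂ : Type}
    (A : (δ : Δ) → FA σ (Q δ)) (F : (δ : Δ) → Set (Q δ)) (A₂ : FA Δ Q₂)
    (α : σ → ((δ : Δ) → Q δ) → Δ)
    (hα : ∀ (a : σ) (q : (δ : Δ) → Q δ),
      α a q = firstOrLast fun δ => q δ ∈ F δ) :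
    ∀ s : FForest σ,
      evalF (moore (prodFA A) A₂ α) s
        = ((fun δ => evalF (A δ) s), evalF A₂ (charF A F s)) := by
  exact auxF A F A₂ α hα
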